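/- arXiv:1208.2538 — 3 statements merged into one kernel-verified Lean document; each statement's English description precedes it below -/
import Mathlib

section
/- Let S be a finite symmetric subset of a group with 1 ∈ S, and let k ≥ 3 be an integer. Then |S^k|/|S| ≤ (|S³|/|S|)^{k-2}. -/
open scoped Pointwise

namespace Finset

theorem card_pow_div_card_le_card_pow_three_div_card_pow {G : Type*} [Group G] [DecidableEq G]
    {A : Finset G} (hAsymm : A⁻¹ = A) {m : ℕ} (hm : 3 ≤ m) :
    (#(A ^ m) : ℝ) / #A ≤ ((#(A ^ 3) : ℝ) / #A) ^ (m - 2) := by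
  -- If `A = ∅` then `A ^ 3 = ∅`, so the tripling constant `|A³| / |A|` works despite `x / 0 = 0`.
  have htripling : (#(A ^ 3) : ℝ) ≤ #(A ^ 3) / #A * #A := by
    refine (div_mul_cancel_of_imp fun hA ↦ ?_).ge
    rw [Nat.cast_eq_zero, card_eq_zero] at hA
    simp [hA]
  exact div_le_of_le_mul₀ (by positivity) (by positivity)
    (small_pow_of_small_tripling hm htripling hAsymm)

end Finset

theorem ruzsa_tripling_general {G : Type*} [Group G] (S : Set G) (hfin : S.Finite)
    (hsym : S = S⁻¹) (k : ℕ) (hk : 3 ≤ k) :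
    (Nat.card ↥(S ^ k) : ℝ) / (Nat.card ↥S : ℝ) ≤
      ((Nat.card ↥(S * S * S) : ℝ) / (Nat.card ↥S : ℝ)) ^ (k - 2) := by
  classical
  lift S to Finset G using hfin with A
  have hAsymm : A⁻¹ = A := by exact_mod_cast hsym.symm
  simpa only [← pow_three', ← Finset.coe_pow, Nat.card_coe_set_eq, Set.ncard_coe_finset] using
    Finset.card_pow_div_card_le_card_pow_three_div_card_pow hAsymm hk

/-- **Ruzsa's tripling inequality**: if `S` is a finite symmetric subset of a group
containing `1` and `k ≥ 3`, then `|S^k| / |S| ≤ (|S³| / |S|)^(k-2)`. -/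
theorem ruzsa_tripling {G : Type*} [Group G] (S : Set G) (hfin : S.Finite)
    (hone : (1 : G) ∈ S) (hsym : S = S⁻¹) (k : ℕ) (hk : 3 ≤ k) :
    (Nat.card ↥(S ^ k) : ℝ) / (Nat.card ↥S : ℝ) ≤
      ((Nat.card ↥(S * S * S) : ℝ) / (Nat.card ↥S : ℝ)) ^ (k - 2) :=
  ruzsa_tripling_general S hfin hsym k hk
end

section
/- Let S be a finite symmetric subset of a group G with 1 ∈ S, let H be a subgroup of G, and let k be a positive integer. Then |S^k ∩ H| / |S² ∩ H| ≤ |S^{k+1}| / |S|. -/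
/-!
Pick a set `R ⊆ A` of representatives of the left cosets of `H` that meet `A`. Every `a ∈ A`
is `r * (r⁻¹ * a)` with `r⁻¹ * a ∈ A⁻¹ * A ∩ H`, so `|A| ≤ |R| · |A⁻¹A ∩ H|`; and since the
elements of `R` lie in distinct cosets, `R * (B ∩ H)` has exactly `|R| · |B ∩ H|` elements,
all in `A * B`. Multiplying the two bounds gives `|A| · |B ∩ H| ≤ |A⁻¹A ∩ H| · |AB|`; take
`A = S` and `B = S^k`, so that `A⁻¹A = S²` by symmetry.
-/

open scoped Pointwise

theorem Set.Finite.pow {M : Type*} [Monoid M] {s : Set M} (hs : s.Finite) :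
    ∀ n : ℕ, (s ^ n).Finite
  | 0 => by simp
  | n + 1 => by rw [pow_succ]; exact (hs.pow n).mul hs

namespace Subgroup

variable {G : Type*} [Group G] (H : Subgroup G)

theorem natCard_mul_of_injOn_mk {R K : Set G} (hR : R.InjOn ((↑) : G → G ⧸ H))
    (hK : K ⊆ H) : Nat.card ↥(R * K) = Nat.card R * Nat.card K := by
  have hinj : (R ×ˢ K).InjOn fun p : G × G => p.1 * p.2 := by
    rintro ⟨r, k⟩ ⟨hr, hk⟩ ⟨r', k'⟩ ⟨hr', hk'⟩ (h : r * k = r' * k')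
    have hrr' : r = r' := hR hr hr' <| QuotientGroup.eq.2 <| by
      rw [inv_mul_eq_iff_eq_mul.2 (by rw [← mul_assoc, h, mul_inv_cancel_right])]
      exact H.mul_mem (hK hk) (H.inv_mem (hK hk'))
    subst hrr'
    exact Prod.ext rfl (mul_left_cancel h)
  rw [← Set.image2_mul, ← Set.image_prod, Nat.card_image_of_injOn hinj,
    Nat.card_congr (Equiv.Set.prod R K), Nat.card_prod]

theorem subset_mul_inv_mul_inter_of_mk_image_eq {A R : Set G} (hRA : R ⊆ A)
    (hR : ((↑) : G → G ⧸ H) '' R = (↑) '' A) : A ⊆ R * (A⁻¹ * A ∩ H) := by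
  intro a ha
  obtain ⟨r, hr, hra⟩ : (a : G ⧸ H) ∈ (↑) '' R := hR ▸ Set.mem_image_of_mem _ ha
  refine ⟨r, hr, r⁻¹ * a, ⟨Set.mul_mem_mul (Set.inv_mem_inv.2 (hRA hr)) ha, ?_⟩, ?_⟩
  · exact QuotientGroup.eq.1 hra
  · exact mul_inv_cancel_left r a

theorem natCard_mul_natCard_inter_le {A B : Set G} (hA : A.Finite) (hB : B.Finite) :
    Nat.card A * Nat.card ↥(B ∩ H) ≤ Nat.card ↥(A⁻¹ * A ∩ H) * Nat.card ↥(A * B) := by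
  obtain ⟨R, hRA, hR⟩ := Set.exists_subset_bijOn A ((↑) : G → G ⧸ H)
  have hcover : Nat.card A ≤ Nat.card R * Nat.card ↥(A⁻¹ * A ∩ H) :=
    (Nat.card_mono ((hA.subset hRA).mul ((hA.inv.mul hA).inter_of_left _))
      (H.subset_mul_inv_mul_inter_of_mk_image_eq hRA hR.image_eq)).trans Set.natCard_mul_le
  have hpack : Nat.card R * Nat.card ↥(B ∩ H) ≤ Nat.card ↥(A * B) := by
    rw [← H.natCard_mul_of_injOn_mk hR.injOn Set.inter_subset_right]
    exact Nat.card_mono (hA.mul hB) (Set.mul_subset_mul hRA Set.inter_subset_left)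
  calc Nat.card A * Nat.card ↥(B ∩ H)
      ≤ Nat.card R * Nat.card ↥(A⁻¹ * A ∩ H) * Nat.card ↥(B ∩ H) :=
        Nat.mul_le_mul_right _ hcover
    _ = Nat.card ↥(A⁻¹ * A ∩ H) * (Nat.card R * Nat.card ↥(B ∩ H)) := by ring
    _ ≤ Nat.card ↥(A⁻¹ * A ∩ H) * Nat.card ↥(A * B) := Nat.mul_le_mul_left _ hpack

end Subgroup

theorem growth_in_subgroup_general {G : Type*} [Group G] (S : Set G) (hfin : S.Finite)
    (hone : (1 : G) ∈ S) (hsym : S = S⁻¹) (H : Subgroup G) (k : ℕ) :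
    (Nat.card ↥(S ^ k ∩ (H : Set G)) : ℝ) / (Nat.card ↥(S ^ 2 ∩ (H : Set G)) : ℝ) ≤
      (Nat.card ↥(S ^ (k + 1)) : ℝ) / (Nat.card ↥S : ℝ) := by
  have hS_pos : 0 < Nat.card S := Nat.card_pos_iff.2 ⟨⟨1, hone⟩, hfin⟩
  have hsq_pos : 0 < Nat.card ↥(S ^ 2 ∩ (H : Set G)) :=
    Nat.card_pos_iff.2 ⟨⟨1, Set.one_mem_pow hone, H.one_mem⟩, (hfin.pow 2).inter_of_left _⟩
  have key := H.natCard_mul_natCard_inter_le hfin (hfin.pow k)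
  rw [← hsym, ← sq, ← pow_succ'] at key
  rw [div_le_div_iff₀ (by exact_mod_cast hsq_pos) (by exact_mod_cast hS_pos)]
  norm_cast
  linarith

/-- Growth in a subgroup implies growth in the group: if `S` is a finite symmetric
subset of `G` containing `1`, `H ≤ G` a subgroup and `k > 0`, then
`|S^k ∩ H| / |S² ∩ H| ≤ |S^(k+1)| / |S|`. -/
theorem growth_in_subgroup {G : Type*} [Group G] (S : Set G) (hfin : S.Finite)
    (hone : (1 : G) ∈ S) (hsym : S = S⁻¹) (H : Subgroup G) (k : ℕ) (hk : 0 < k) :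
    (Nat.card ↥(S ^ k ∩ (H : Set G)) : ℝ) / (Nat.card ↥(S ^ 2 ∩ (H : Set G)) : ℝ) ≤
      (Nat.card ↥(S ^ (k + 1)) : ℝ) / (Nat.card ↥S : ℝ) :=
  growth_in_subgroup_general S hfin hone hsym H k
end

section
/- Let p be a prime, let F be a field of characteristic p, let Γ be a finitely generated subgroup of GL(n,F), and let g₁, …, g_t be pairwise distinct elements of Γ. Then there exist a finite field K of characteristic p and a group homomorphism φ : Γ → GL(n,K) such that φ(g₁), …, φ(g_t) are pairwise distinct. -/
open scoped MatrixGroups Pointwise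

set_option maxHeartbeats 1000000 in
set_option synthInstance.maxHeartbeats 1000000 in
/-- **Malcev's theorem** in positive characteristic: let `F` be a field of prime
characteristic `p`, let `Γ` be a finitely generated subgroup of `GL(n,F)` and let
`g 0, …, g (t-1)` be pairwise distinct elements of `Γ`. Then there are a finite
field `K` of characteristic `p` and a homomorphism `φ : Γ →* GL(n,K)` under which
the images of the `g i` are pairwise distinct. -/
theorem malcev_positive_characteristic (n : ℕ) (p : ℕ) (hp : p.Prime)
    (F : Type) [Field F] [CharP F p]
    (Γ : Subgroup (Matrix.GeneralLinearGroup (Fin n) F)) (hΓ : Γ.FG)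
    (t : ℕ) (g : Fin t → Γ) (hg : Function.Injective g) :
    ∃ (K : Type) (_ : Field K), Finite K ∧ CharP K p ∧
      ∃ φ : Γ →* Matrix.GeneralLinearGroup (Fin n) K,
        ∀ i j : Fin t, i ≠ j → φ (g i) ≠ φ (g j) := by
  classical
  haveI := Fact.mk hp
  letI : Algebra (ZMod p) F := ZMod.algebra F p
  obtain ⟨T, hT⟩ := hΓ
  -- the finite set of entries of the generators and their inverses
  let E : Finset F := T.biUnion fun M =>
    (Finset.univ.image fun ij : Fin n × Fin n => Units.val M ij.1 ij.2) ∪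
      (Finset.univ.image fun ij : Fin n × Fin n => Units.val M⁻¹ ij.1 ij.2)
  -- the finitely generated subalgebra they generate
  let A : Subalgebra (ZMod p) F := Algebra.adjoin (ZMod p) (E : Set F)
  -- the subgroup of `GL(n,F)` of matrices with entries (and inverse entries) in `A`
  let H : Subgroup (GL (Fin n) F) :=
  { carrier := {x | (∀ i j, Units.val x i j ∈ A) ∧ ∀ i j, Units.val x⁻¹ i j ∈ A}
    one_mem' := by
      have h1 : ∀ i j : Fin n, Units.val (1 : (GL (Fin n) F)) i j ∈ A := by
        intro i j
        rw [Units.val_one, Matrix.one_apply]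
        split_ifs
        · exact one_mem A
        · exact zero_mem A
      exact ⟨h1, by rw [inv_one]; exact h1⟩
    mul_mem' := by
      rintro a b ⟨ha1, ha2⟩ ⟨hb1, hb2⟩
      constructor
      · intro i j
        rw [Units.val_mul, Matrix.mul_apply]
        exact Subalgebra.sum_mem A fun k _ => mul_mem (ha1 i k) (hb1 k j)
      · intro i j
        rw [mul_inv_rev, Units.val_mul, Matrix.mul_apply]
        exact Subalgebra.sum_mem A fun k _ => mul_mem (hb2 i k) (ha2 k j)
    inv_mem' := by
      rintro a ⟨ha1, ha2⟩
      exact ⟨ha2, by rw [inv_inv]; exact ha1⟩ }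
  have hΓH : Γ ≤ H := by
    rw [← hT]
    refine (Subgroup.closure_le H).mpr ?_
    intro M hM
    have hM' : M ∈ T := hM
    constructor
    · intro i j
      refine Algebra.subset_adjoin ?_
      exact Finset.mem_biUnion.mpr ⟨M, hM', Finset.mem_union_left _
        (Finset.mem_image.mpr ⟨(i, j), Finset.mem_univ _, rfl⟩)⟩
    · intro i j
      refine Algebra.subset_adjoin ?_
      exact Finset.mem_biUnion.mpr ⟨M, hM', Finset.mem_union_right _
        (Finset.mem_image.mpr ⟨(i, j), Finset.mem_univ _, rfl⟩)⟩
  -- matrices over `A`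
  let N : ∀ x : (GL (Fin n) F), (∀ i j, Units.val x i j ∈ A) → Matrix (Fin n) (Fin n) A :=
    fun x hx => Matrix.of fun i j => (⟨Units.val x i j, hx i j⟩ : A)
  let ι : A →+* F := (Subalgebra.val A).toRingHom
  let jm : Matrix (Fin n) (Fin n) A →+* Matrix (Fin n) (Fin n) F := ι.mapMatrix
  have hjm : Function.Injective jm := by
    intro M M' h
    ext i j
    have h2 : (jm M) i j = (jm M') i j := by rw [h]
    exact h2
  have hjmN : ∀ (x : (GL (Fin n) F)) (hx : ∀ i j, Units.val x i j ∈ A), jm (N x hx) = Units.val x := by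
    intro x hx
    ext i j
    rfl
  have hval : ∀ x : Γ, ∀ i j, Units.val (x : (GL (Fin n) F)) i j ∈ A := fun x => (hΓH x.2).1
  have hvalinv : ∀ x : Γ, ∀ i j, Units.val ((x : (GL (Fin n) F))⁻¹) i j ∈ A := fun x => (hΓH x.2).2
  have hNmulinv : ∀ x : Γ, N (↑x) (hval x) * N ((↑x : (GL (Fin n) F))⁻¹) (hvalinv x) = 1 := by
    intro x
    apply hjm
    rw [map_mul, map_one, hjmN, hjmN, ← Units.val_mul]
    simp
  have hNinvmul : ∀ x : Γ, N ((↑x : (GL (Fin n) F))⁻¹) (hvalinv x) * N (↑x) (hval x) = 1 := by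
    intro x
    apply hjm
    rw [map_mul, map_one, hjmN, hjmN, ← Units.val_mul]
    simp
  -- the homomorphism from `Γ` to `GL(n,A)`
  let ψ : Γ →* Matrix.GeneralLinearGroup (Fin n) A :=
  { toFun := fun x => ⟨N (↑x) (hval x), N ((↑x : (GL (Fin n) F))⁻¹) (hvalinv x), hNmulinv x, hNinvmul x⟩
    map_one' := by
      refine Units.ext ?_
      apply hjm
      rw [hjmN]
      simp
    map_mul' := fun x y => by
      refine Units.ext ?_
      show N _ _ = N _ _ * N _ _
      apply hjm
      rw [map_mul, hjmN, hjmN, hjmN]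
      simp }
  have hψinj : Function.Injective ψ := by
    intro x y hxy
    have h1 : N (↑x) (hval x) = N (↑y) (hval y) := congrArg Units.val hxy
    have h2 : Units.val (↑x : (GL (Fin n) F)) = Units.val (↑y : (GL (Fin n) F)) := by
      rw [← hjmN ↑x (hval x), ← hjmN ↑y (hval y), h1]
    exact Subtype.ext (Units.ext h2)
  -- separating elements
  let d : Fin t → Fin t → A := fun i j =>
    if h : ∃ k l, Units.val (ψ (g i)) k l ≠ Units.val (ψ (g j)) k l then
      Units.val (ψ (g i)) h.choose h.choose_spec.choose -
        Units.val (ψ (g j)) h.choose h.choose_spec.choose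
    else 1
  have hd : ∀ i j, d i j ≠ 0 := by
    intro i j
    show dite _ _ _ ≠ 0
    split_ifs with h
    · exact sub_ne_zero_of_ne h.choose_spec.choose_spec
    · exact one_ne_zero
  let s : A := ∏ i : Fin t, ∏ j : Fin t, d i j
  have hs : s ≠ 0 :=
    Finset.prod_ne_zero_iff.mpr fun i _ => Finset.prod_ne_zero_iff.mpr fun j _ => hd i j
  -- a maximal ideal of `A` avoiding `s`
  haveI hft : Algebra.FiniteType (ZMod p) A :=
    (Subalgebra.fg_iff_finiteType A).mp (Subalgebra.fg_adjoin_finset E)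
  haveI : IsJacobsonRing A := isJacobsonRing_of_finiteType (A := ZMod p)
  have hjac : Ideal.jacobson (⊥ : Ideal A) = ⊥ := by
    rw [← Ideal.radical_eq_jacobson, Ideal.radical_bot_of_noZeroDivisors]
  have hmax : ∃ m : Ideal A, m.IsMaximal ∧ s ∉ m := by
    by_contra hcon
    push_neg at hcon
    have hmem : s ∈ Ideal.jacobson (⊥ : Ideal A) := by
      rw [Ideal.jacobson]
      exact Submodule.mem_sInf.mpr fun J hJ => hcon J hJ.2
    rw [hjac, Ideal.mem_bot] at hmem
    exact hs hmem
  obtain ⟨m, hm, hsm⟩ := hmax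
  haveI := hm
  letI fieldK : Field (A ⧸ m) := Ideal.Quotient.field m
  letI : Algebra (ZMod p) (A ⧸ m) := Ideal.Quotient.algebra (ZMod p)
  haveI hftK : Algebra.FiniteType (ZMod p) (A ⧸ m) :=
    hft.of_surjective (Ideal.Quotient.mkₐ (ZMod p) m) (Ideal.Quotient.mkₐ_surjective _ _)
  haveI : Module.Finite (ZMod p) (A ⧸ m) :=
    finite_of_finite_type_of_isJacobsonRing (ZMod p) (A ⧸ m)
  have hfin : Finite (A ⧸ m) := Module.finite_of_finite (ZMod p)
  have hchar : CharP (A ⧸ m) p :=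
    charP_of_injective_ringHom (algebraMap (ZMod p) (A ⧸ m)).injective p
  let q : A →+* A ⧸ m := Ideal.Quotient.mk m
  refine ⟨A ⧸ m, fieldK, hfin, hchar,
    (Matrix.GeneralLinearGroup.map q).comp ψ, ?_⟩
  intro i j hij hEq
  have hNe : ∃ k l, Units.val (ψ (g i)) k l ≠ Units.val (ψ (g j)) k l := by
    by_contra hcon
    push_neg at hcon
    apply hij
    apply hg
    apply hψinj
    refine Units.ext ?_
    ext k l
    exact congrArg Subtype.val (hcon k l)
  have hdij : d i j = Units.val (ψ (g i)) hNe.choose hNe.choose_spec.choose -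
      Units.val (ψ (g j)) hNe.choose hNe.choose_spec.choose := dif_pos hNe
  have hdm : d i j ∉ m := by
    intro hmem
    apply hsm
    have h1 : d i j ∣ ∏ j' : Fin t, d i j' := Finset.dvd_prod_of_mem _ (Finset.mem_univ j)
    have h2 : (∏ j' : Fin t, d i j') ∣ s :=
      Finset.dvd_prod_of_mem (fun i' => ∏ j' : Fin t, d i' j') (Finset.mem_univ i)
    obtain ⟨c, hc⟩ := h1.trans h2
    rw [hc]
    exact Ideal.mul_mem_right _ m hmem
  have hq : q (d i j) ≠ 0 := fun h0 => hdm (Ideal.Quotient.eq_zero_iff_mem.mp h0)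
  have hval_eq : (Units.val (ψ (g i))).map q = (Units.val (ψ (g j))).map q :=
    congrArg Units.val hEq
  have hentry : q (Units.val (ψ (g i)) hNe.choose hNe.choose_spec.choose) =
      q (Units.val (ψ (g j)) hNe.choose hNe.choose_spec.choose) :=
    congrFun (congrFun hval_eq hNe.choose) hNe.choose_spec.choose
  apply hq
  rw [hdij, map_sub, hentry, sub_self]
end
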